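/- arXiv:2111.05513 — 2 statements merged into one kernel-verified Lean document; each statement's English description precedes it below -/
import Mathlib

section
/- Let $\mathcal{E}$ be as above (Kraus operators $E_k|0\rangle=\sqrt{p_k}|k'\rangle$, $E_k|1\rangle=\sqrt{p_k}|\pi(k)'\rangle$ with $\pi$ an involution). Then for input $\rho=q|0\rangle\langle 0|+(1-q)|1\rangle\langle 1|$, the single letter coherent information $I(\rho,\mathcal{E})=S(\mathcal{E}(\rho))-S(W)$ equals $H\big((qp_k+(1-q)p_{\pi(k)})_k\big)-H\big((p_k)_k\big)$, and it is maximized over $q\in[0,1]$ at $q=\tfrac12$, with maximum value $H\big((\tfrac12 p_k+\tfrac12 p_{\pi(k)})_k\big)-H\big((p_k)_k\big)$. -/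
open scoped BigOperators Matrix

/-- Outer product `|v⟩⟨v|`. -/
noncomputable def outer {n : ℕ} (v : EuclideanSpace ℂ (Fin n)) : Matrix (Fin n) (Fin n) ℂ :=
  Matrix.of fun a b => v a * star (v b)

/-- Mixed outer product `|v⟩⟨w|`. -/
noncomputable def outerMix {m n : ℕ} (v : EuclideanSpace ℂ (Fin m))
    (w : EuclideanSpace ℂ (Fin n)) : Matrix (Fin m) (Fin n) ℂ :=
  Matrix.of fun a b => v a * star (w b)

/-- Shannon entropy (base 2). -/
noncomputable def shannonH {M : ℕ} (r : Fin M → ℝ) : ℝ :=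
  ∑ k, -(r k * Real.logb 2 (r k))

lemma outer_eq_outerMix {n : ℕ} (v : EuclideanSpace ℂ (Fin n)) : outer v = outerMix v v := rfl

lemma outerMix_mul_outerMix {m n r : ℕ} (v : EuclideanSpace ℂ (Fin m))
    (w u : EuclideanSpace ℂ (Fin n)) (z : EuclideanSpace ℂ (Fin r)) :
    outerMix v w * outerMix u z = (inner ℂ w u : ℂ) • outerMix v z := by
  ext a b
  simp only [Matrix.mul_apply, outerMix, Matrix.of_apply, Matrix.smul_apply, smul_eq_mul,
    PiLp.inner_apply, RCLike.inner_apply, starRingEnd_apply, Finset.sum_mul]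
  exact Finset.sum_congr rfl fun c _ => by ring

lemma outerMix_conjTranspose {m n : ℕ} (v : EuclideanSpace ℂ (Fin m))
    (w : EuclideanSpace ℂ (Fin n)) : (outerMix v w)ᴴ = outerMix w v := by
  ext a b
  simp [outerMix, Matrix.conjTranspose_apply, star_mul, mul_comm]

lemma mul_log_half_le {a b : ℝ} (ha : 0 ≤ a) (hb : 0 ≤ b) :
    -(a * Real.logb 2 a) + -(b * Real.logb 2 b)
      ≤ 2 * -(((a + b) / 2) * Real.logb 2 ((a + b) / 2)) := by
  have hlog2 : 0 < Real.log 2 := Real.log_pos (by norm_num)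
  have h := Real.convexOn_mul_log.2 (Set.mem_Ici.2 ha) (Set.mem_Ici.2 hb)
    (by norm_num : (0:ℝ) ≤ 1/2) (by norm_num : (0:ℝ) ≤ 1/2) (by norm_num)
  simp only [smul_eq_mul] at h
  have harg : (1/2 : ℝ) * a + (1/2 : ℝ) * b = (a + b) / 2 := by ring
  rw [harg] at h
  have key : ((-(a * Real.log a) + -(b * Real.log b)) / Real.log 2)
      ≤ (2 * -(((a + b) / 2) * Real.log ((a + b) / 2))) / Real.log 2 :=
    (div_le_div_iff_of_pos_right hlog2).mpr (by linarith)
  simp only [Real.logb]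
  calc -(a * (Real.log a / Real.log 2)) + -(b * (Real.log b / Real.log 2))
      = (-(a * Real.log a) + -(b * Real.log b)) / Real.log 2 := by ring
    _ ≤ (2 * -(((a + b) / 2) * Real.log ((a + b) / 2))) / Real.log 2 := key
    _ = 2 * -((a + b) / 2 * (Real.log ((a + b) / 2) / Real.log 2)) := by ring

/-- For the two-dimensional-input quantum quasi symmetric channel, the single letter
coherent information for input `ρ = q|0⟩⟨0| + (1-q)|1⟩⟨1|` equals
`H((q pₖ + (1-q) p_{π(k)})ₖ) - H(p)`: the channel output is diagonal in the output basis
with eigenvalues `q pₖ + (1-q) p_{π(k)}` (while the entropy exchange is `H(p)`), and the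
coherent information is maximized over `q ∈ [0,1]` at `q = 1/2`, with maximum value
`H((½pₖ + ½p_{π(k)})ₖ) - H(p)`. -/
theorem coherent_info_max_at_half {M : ℕ}
    (π : Equiv.Perm (Fin M)) (hπ : ∀ k, π (π k) = k)
    (p : Fin M → ℝ) (hp0 : ∀ k, 0 ≤ p k) (hp1 : ∑ k, p k = 1)
    (b2 : OrthonormalBasis (Fin 2) ℂ (EuclideanSpace ℂ (Fin 2)))
    (bM : OrthonormalBasis (Fin M) ℂ (EuclideanSpace ℂ (Fin M)))
    (E : Fin M → Matrix (Fin M) (Fin 2) ℂ)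
    (hE : ∀ k, E k = (Real.sqrt (p k) : ℂ) •
      (outerMix (bM k) (b2 0) + outerMix (bM (π k)) (b2 1)))
    (I : ℝ → ℝ)
    (hI : ∀ q, I q = shannonH (fun k => q * p k + (1 - q) * p (π k)) - shannonH p) :
    (∀ q : ℝ, q ∈ Set.Icc (0 : ℝ) 1 →
      ∑ k, E k * ((q : ℂ) • outer (b2 0) + ((1 - q : ℝ) : ℂ) • outer (b2 1)) * (E k)ᴴ
        = ∑ k, ((q * p k + (1 - q) * p (π k) : ℝ) : ℂ) • outer (bM k)) ∧
    (∀ q ∈ Set.Icc (0 : ℝ) 1, I q ≤ I (1 / 2)) ∧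
    I (1 / 2) = shannonH (fun k => (1 / 2) * p k + (1 / 2) * p (π k)) - shannonH p := by
  have hb2 : ∀ i j : Fin 2, (inner ℂ (b2 i) (b2 j) : ℂ) = if i = j then 1 else 0 := fun i j =>
    orthonormal_iff_ite.mp b2.orthonormal i j
  refine ⟨?_, ?_, ?_⟩
  · intro q hq
    have hk : ∀ k : Fin M,
        E k * ((q : ℂ) • outer (b2 0) + ((1 - q : ℝ) : ℂ) • outer (b2 1)) * (E k)ᴴ
          = ((q * p k : ℝ) : ℂ) • outer (bM k)
            + (((1 - q) * p k : ℝ) : ℂ) • outer (bM (π k)) := by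
      intro k
      have hc : ((Real.sqrt (p k) : ℂ)) * ((Real.sqrt (p k) : ℂ)) = ((p k : ℝ) : ℂ) := by
        rw [← Complex.ofReal_mul, Real.mul_self_sqrt (hp0 k)]
      rw [hE k]
      simp only [outer_eq_outerMix, Matrix.conjTranspose_smul, Matrix.conjTranspose_add,
        outerMix_conjTranspose, Matrix.add_mul, Matrix.mul_add, Matrix.smul_mul,
        Matrix.mul_smul, outerMix_mul_outerMix, hb2, Complex.star_def, Complex.conj_ofReal]
      norm_num
      rw [← hc]
      match_scalars <;> (simp only [Complex.coe_algebraMap]; push_cast; ring)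
    rw [Finset.sum_congr rfl fun k _ => hk k, Finset.sum_add_distrib]
    have h2 : ∑ k, (((1 - q) * p k : ℝ) : ℂ) • outer (bM (π k))
        = ∑ k, (((1 - q) * p (π k) : ℝ) : ℂ) • outer (bM k) :=
      (Fintype.sum_equiv π (fun k => (((1 - q) * p (π k) : ℝ) : ℂ) • outer (bM k))
        (fun k => (((1 - q) * p k : ℝ) : ℂ) • outer (bM (π k)))
        (fun k => by simp only [hπ])).symm
    rw [h2, ← Finset.sum_add_distrib]
    refine Finset.sum_congr rfl fun k _ => ?_
    rw [← add_smul]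
    norm_cast
  · intro q hq
    rw [hI, hI]
    have hr : ∀ k, 0 ≤ q * p k + (1 - q) * p (π k) := fun k =>
      add_nonneg (mul_nonneg hq.1 (hp0 k)) (mul_nonneg (by linarith [hq.2]) (hp0 (π k)))
    have hs : ∀ k, 0 ≤ (1 - q) * p k + q * p (π k) := fun k =>
      add_nonneg (mul_nonneg (by linarith [hq.2]) (hp0 k)) (mul_nonneg hq.1 (hp0 (π k)))
    have hre : shannonH (fun k => q * p k + (1 - q) * p (π k))
        = ∑ k, -(((1 - q) * p k + q * p (π k)) * Real.logb 2 ((1 - q) * p k + q * p (π k))) := by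
      unfold shannonH
      refine Fintype.sum_equiv π _ _ fun k => ?_
      simp only [hπ]
      ring_nf
    have hptw : ∀ k : Fin M,
        -((q * p k + (1 - q) * p (π k)) * Real.logb 2 (q * p k + (1 - q) * p (π k)))
          + -(((1 - q) * p k + q * p (π k)) * Real.logb 2 ((1 - q) * p k + q * p (π k)))
        ≤ 2 * -((1/2 * p k + 1/2 * p (π k)) * Real.logb 2 (1/2 * p k + 1/2 * p (π k))) := by
      intro k
      have := mul_log_half_le (hr k) (hs k)
      have harg : ((q * p k + (1 - q) * p (π k)) + ((1 - q) * p k + q * p (π k))) / 2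
          = 1/2 * p k + 1/2 * p (π k) := by ring
      rwa [harg] at this
    have hsum : shannonH (fun k => q * p k + (1 - q) * p (π k))
        + shannonH (fun k => q * p k + (1 - q) * p (π k))
        ≤ 2 * shannonH (fun k => 1/2 * p k + 1/2 * p (π k)) := by
      nth_rewrite 2 [hre]
      unfold shannonH
      rw [← Finset.sum_add_distrib, Finset.mul_sum]
      refine Finset.sum_le_sum fun k _ => ?_
      simp only
      have := hptw k
      linarith
    have h12 : shannonH (fun k => 1/2 * p k + (1 - 1/2) * p (π k))
        = shannonH (fun k => 1/2 * p k + 1/2 * p (π k)) := by norm_num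
    rw [h12]
    linarith
  · rw [hI]; norm_num
end

section
/- With $W$, $W_N$, $G_N$, and the action $\cdot$ as above, define for $1\le i\le N$ the coordinate channel $W_N^{(i)}(y_1^N,u_1^{i-1}\,|\,u_i)=\sum_{u_{i+1}^N\in\{0,1\}^{N-i}}\frac{1}{2^{N-1}}W_N\big(y_1^N\,\big|\,(u_1^{i-1},u_i,u_{i+1}^N)G_N\big)$. Then for every $u_1^{i-1}\in\{0,1\}^{i-1}$ and every $u_i\in\{0,1\}$, $W_N^{(i)}(y_1^N,0_1^{i-1}\,|\,u_i)=W_N^{(i)}\big(\big((u_1^{i-1},0,0_{i+1}^N)G_N\big)\cdot y_1^N,\;u_1^{i-1}\,\big|\,u_i\big)$. -/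
open scoped BigOperators Matrix

/-- The action `a · y = π_a(y)` with `π_0 = id` and `π_1` a given permutation. -/
def dotAct {Y : Type*} (π1 : Equiv.Perm Y) (a : ZMod 2) (y : Y) : Y :=
  if a = 1 then π1 y else y

/-- The coordinate channels of a symmetric binary-input channel are symmetric:
`W_N^{(i)}(y₁ᴺ, 0₁^{i-1} | u_i) = W_N^{(i)}(((u₁^{i-1},0,0)G_N)·y₁ᴺ, u₁^{i-1} | u_i)`.
Here the coordinate channel `Wcoord y u uᵢ` depends on the prefix `u_j` for `j < i`, the
channel input `uᵢ`, and averages uniformly over the tail `u_{i+1}^N`. -/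
theorem coordinate_channel_symmetric {Y : Type*} {N : ℕ}
    (π1 : Equiv.Perm Y) (hinv : ∀ y, π1 (π1 y) = y)
    (W : ZMod 2 → Y → ℝ)
    (hsym : ∀ y, W 1 y = W 0 (π1 y))
    (G : Matrix (Fin N) (Fin N) (ZMod 2)) (i : Fin N)
    (Wcoord : (Fin N → Y) → (Fin N → ZMod 2) → ZMod 2 → ℝ)
    (hcoord : ∀ y u ui, Wcoord y u ui
      = (1 / 2 ^ (N - 1) : ℝ) * ∑ t : {j : Fin N // i < j} → ZMod 2,
          ∏ j, W (Matrix.vecMul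
            (fun j' => if h : i < j' then t ⟨j', h⟩ else if j' = i then ui else u j') G j)
            (y j)) :
    ∀ (y : Fin N → Y) (u : Fin N → ZMod 2) (ui : ZMod 2),
      Wcoord y (fun _ => 0) ui
        = Wcoord
            (fun j => dotAct π1
              (Matrix.vecMul (fun j' => if j' < i then u j' else 0) G j) (y j))
            u ui := by
  have key : ∀ (s c : ZMod 2) (z : Y), W (s + c) z = W s (dotAct π1 c z) := by
    intro s c z
    have hcases : ∀ a : ZMod 2, a = 0 ∨ a = 1 := by decide
    rcases hcases c with rfl | rfl
    · simp [dotAct]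
    · rcases hcases s with rfl | rfl
      · simpa [dotAct] using hsym z
      · have h := hsym (π1 z)
        rw [hinv z] at h
        have h2 : (1 : ZMod 2) + 1 = 0 := by decide
        simp [dotAct, h2, ← h]
  intro y u ui
  rw [hcoord, hcoord]
  congr 1
  apply Finset.sum_congr rfl
  intro t _
  apply Finset.prod_congr rfl
  intro j _
  rw [← key]
  congr 1
  rw [← Pi.add_apply, ← Matrix.add_vecMul]
  congr 1
  funext j'
  simp only [Pi.add_apply]
  by_cases h1 : i < j'
  · have h2 : ¬ j' < i := by omega
    simp [h1, h2]
  · by_cases h2 : j' = i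
    · subst h2
      simp [h1]
    · have h3 : j' < i := by omega
      have h4 : ¬ i < j' := h1
      simp [h4, h2, h3, CharTwo.add_self_eq_zero]
end
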